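/- Let x̃ ∈ ℝ^d be a unit vector and a > 0. Then for every h ∈ ℝ^d, ∫_{ℝ^d} exp(i⟨h,x⟩)(-i sign(⟨x,x̃⟩)) (2a√π)^{-d} exp(-‖x‖²/(4a²)) dx = exp(-a²‖h‖²) erfi(a⟨h,x̃⟩). -/

import Mathlib

open MeasureTheory

noncomputable def erfi (z : ℝ) : ℝ :=
  (2 / Real.sqrt Real.pi) * ∫ t in (0:ℝ)..z, Real.exp (t ^ 2)

/-!
Rotate coordinates so that `xt` becomes a basis vector `eᵢ`. In these coordinates the integrand
is a product of one-dimensional functions, so by Fubini the integral is a product of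
one-dimensional integrals against the Gaussian density `φ` of variance `2a²`. Those without the
sign are values of the characteristic function of `φ`, namely `exp (-a² cⱼ²)` for the coordinates
`cⱼ` of `h`. The one with the sign symmetrises (`t ↦ -t`) to `∫ sign t · sin (c t) · φ t`, which
after the substitution `t = 2as` is `(2/√π)` times Dawson's integral
`D y = ∫₀^∞ sin (2ys) e^{-s²} ds` at `y = ac`. Differentiating under the integral sign and
integrating by parts gives `D' = 1 - 2yD`, `D 0 = 0`, hence `D y = e^{-y²} ∫₀^y e^{t²} dt`,
which is `(√π/2) e^{-y²} erfi y`.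
-/

open Real Set Filter Topology ProbabilityTheory
open scoped NNReal

@[fun_prop]
lemma measurable_real_sign : Measurable Real.sign :=
  Measurable.ite measurableSet_Iio measurable_const
    (Measurable.ite measurableSet_Ioi measurable_const measurable_const)

lemma exists_orthonormalBasis_apply_eq {𝕜 E ι : Type*} [RCLike 𝕜] [NormedAddCommGroup E]
    [InnerProductSpace 𝕜 E] [FiniteDimensional 𝕜 E] [Fintype ι]
    (card_ι : Module.finrank 𝕜 E = Fintype.card ι) (i : ι) {v : E} (hv : ‖v‖ = 1) :
    ∃ b : OrthonormalBasis ι 𝕜 E, b i = v := by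
  have hon : Orthonormal 𝕜 (({i} : Set ι).domRestrict fun _ => v) :=
    ⟨fun _ => hv, fun j k hjk => absurd (Subsingleton.elim j k) hjk⟩
  obtain ⟨b, hb⟩ := hon.exists_orthonormalBasis_extension_of_card_eq card_ι
  exact ⟨b, hb i rfl⟩

lemma OrthonormalBasis.integral_comp_repr_symm {ι F E : Type*} [Fintype ι] [NormedAddCommGroup F]
    [InnerProductSpace ℝ F] [FiniteDimensional ℝ F] [MeasurableSpace F] [BorelSpace F]
    [NormedAddCommGroup E] [NormedSpace ℝ E] (b : OrthonormalBasis ι ℝ F) (f : F → E) :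
    ∫ y : EuclideanSpace ℝ ι, f (b.repr.symm y) = ∫ x, f x :=
  b.measurePreserving_measurableEquiv.symm.integral_comp' f

lemma EuclideanSpace.integral_prod_apply {ι 𝕜 : Type*} [Fintype ι] [RCLike 𝕜] (f : ι → ℝ → 𝕜) :
    ∫ y : EuclideanSpace ℝ ι, ∏ i, f i (y i) = ∏ i, ∫ t, f i t := by
  rw [← (EuclideanSpace.volume_preserving_symm_measurableEquiv_toLp ι).symm.integral_comp']
  exact integral_fintype_prod_volume_eq_prod f

noncomputable def dawson (y : ℝ) : ℝ := ∫ s in Ioi 0, sin (2 * y * s) * exp (-s ^ 2)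

lemma integrable_exp_neg_sq : Integrable fun s : ℝ => exp (-s ^ 2) := by
  simpa using integrable_exp_neg_mul_sq one_pos

lemma integrable_sin_mul_exp_neg_sq (c : ℝ) :
    Integrable fun s : ℝ => sin (c * s) * exp (-s ^ 2) :=
  integrable_exp_neg_sq.bdd_mul (by fun_prop) (ae_of_all _ fun s => abs_sin_le_one (c * s))

lemma integrable_mul_cos_mul_exp_neg_sq (c : ℝ) :
    Integrable fun s : ℝ => 2 * s * cos (c * s) * exp (-s ^ 2) := by
  have h : Integrable fun s : ℝ => 2 * s * exp (-s ^ 2) := by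
    simpa [mul_assoc] using (integrable_mul_exp_neg_mul_sq one_pos).const_mul 2
  simpa only [mul_comm, mul_left_comm, mul_assoc] using
    h.bdd_mul (by fun_prop) (ae_of_all _ fun s => abs_cos_le_one (c * s))

lemma integral_Ioi_mul_cos_mul_exp_neg_sq (y : ℝ) :
    ∫ s in Ioi 0, 2 * s * cos (2 * y * s) * exp (-s ^ 2) = 1 - 2 * y * dawson y := by
  have hderiv : ∀ s ∈ Ici (0 : ℝ), HasDerivAt (fun s => -(cos (2 * y * s) * exp (-s ^ 2)))
      (2 * y * (sin (2 * y * s) * exp (-s ^ 2)) + 2 * s * cos (2 * y * s) * exp (-s ^ 2)) s := by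
    intro s _
    refine ((((hasDerivAt_id' s).const_mul (2 * y)).cos.fun_mul
      ((hasDerivAt_pow 2 s).fun_neg.exp)).fun_neg).congr_deriv ?_
    push_cast
    ring
  have hlim : Tendsto (fun s => -(cos (2 * y * s) * exp (-s ^ 2))) atTop (𝓝 0) := by
    have hexp : Tendsto (fun s : ℝ => exp (-s ^ 2)) atTop (𝓝 0) :=
      tendsto_exp_atBot.comp (tendsto_neg_atTop_atBot.comp (tendsto_pow_atTop two_ne_zero))
    refine squeeze_zero_norm (fun s => ?_) hexp
    rw [norm_neg, norm_mul, norm_of_nonneg (exp_pos _).le]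
    exact mul_le_of_le_one_left (exp_pos _).le (abs_cos_le_one _)
  have hsin := (integrable_sin_mul_exp_neg_sq (2 * y)).integrableOn (s := Ioi 0)
  have hcos := (integrable_mul_cos_mul_exp_neg_sq (2 * y)).integrableOn (s := Ioi 0)
  have h := integral_Ioi_of_hasDerivAt_of_tendsto' hderiv ((hsin.const_mul _).add hcos) hlim
  rw [integral_add (hsin.const_mul _) hcos, integral_const_mul] at h
  norm_num at h
  rw [dawson]
  linarith

lemma hasDerivAt_dawson (y : ℝ) : HasDerivAt dawson (1 - 2 * y * dawson y) y := by
  rw [← integral_Ioi_mul_cos_mul_exp_neg_sq]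
  refine (hasDerivAt_integral_of_dominated_loc_of_deriv_le (𝕜 := ℝ) (μ := volume.restrict (Ioi 0))
    (F := fun y s => sin (2 * y * s) * exp (-s ^ 2))
    (F' := fun y s => 2 * s * cos (2 * y * s) * exp (-s ^ 2))
    (bound := fun s => ‖2 * s * exp (-s ^ 2)‖) univ_mem
    (.of_forall fun _ => by fun_prop) ((integrable_sin_mul_exp_neg_sq _).integrableOn)
    (by fun_prop) (ae_of_all _ fun s x _ => ?_) ?_ (ae_of_all _ fun s x _ => ?_)).2
  · rw [norm_mul, norm_mul, norm_mul (2 * s)]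
    exact mul_le_mul_of_nonneg_right (mul_le_of_le_one_right (norm_nonneg _) (abs_cos_le_one _))
      (norm_nonneg _)
  · exact (((integrable_mul_exp_neg_mul_sq one_pos).const_mul 2).norm.integrableOn).congr
      (ae_of_all _ fun s => by simp [mul_assoc])
  · refine ((((hasDerivAt_id' x).const_mul 2).mul_const s).sin.mul_const
      (exp (-s ^ 2))).congr_deriv ?_
    ring

lemma dawson_eq (y : ℝ) : dawson y = exp (-y ^ 2) * ∫ t in 0..y, exp (t ^ 2) := by
  have hderiv (x : ℝ) : HasDerivAt (fun x => exp (x ^ 2) * dawson x) (exp (x ^ 2)) x := by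
    refine (((hasDerivAt_pow 2 x).exp).mul (hasDerivAt_dawson x)).congr_deriv ?_
    push_cast
    ring
  have h := intervalIntegral.integral_eq_sub_of_hasDerivAt (fun t _ => hderiv t)
    ((continuous_exp.comp (continuous_pow 2)).intervalIntegrable 0 y)
  have h0 : dawson 0 = 0 := by simp [dawson]
  simp only [h0, mul_zero, sub_zero] at h
  rw [h, ← mul_assoc, ← exp_add, neg_add_cancel, exp_zero, one_mul]

lemma integral_Ioi_sin_mul_exp_neg_sq_div {a : ℝ} (ha : 0 < a) (c : ℝ) :
    ∫ t in Ioi 0, sin (c * t) * exp (-t ^ 2 / (4 * a ^ 2)) = 2 * a * dawson (a * c) := by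
  have h := integral_comp_mul_left_Ioi' (fun t => sin (c * t) * exp (-t ^ 2 / (4 * a ^ 2))) 0
    (by positivity : 0 < 2 * a)
  rw [mul_zero] at h
  rw [← h, smul_eq_mul, dawson]
  congr 2 with s
  congr 2
  · ring
  · field_simp
    ring

lemma gaussianPDFReal_two_mul_sq {a : ℝ} (ha : 0 < a) (t : ℝ) :
    gaussianPDFReal 0 (2 * a ^ 2).toNNReal t = (2 * a * √π)⁻¹ * exp (-t ^ 2 / (4 * a ^ 2)) := by
  have hsqrt : √(2 * π * (2 * a ^ 2)) = 2 * a * √π := by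
    rw [show 2 * π * (2 * a ^ 2) = (2 * a) ^ 2 * π by ring, sqrt_mul (by positivity),
      sqrt_sq (by positivity)]
  rw [gaussianPDFReal, Real.coe_toNNReal _ (by positivity), hsqrt, sub_zero]
  ring_nf

lemma prod_gaussianPDFReal_two_mul_sq {ι : Type*} [Fintype ι] {a : ℝ} (ha : 0 < a)
    (y : EuclideanSpace ℝ ι) :
    ∏ i, gaussianPDFReal 0 (2 * a ^ 2).toNNReal (y i) =
      ((2 * a * √π) ^ Fintype.card ι)⁻¹ * exp (-‖y‖ ^ 2 / (4 * a ^ 2)) := by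
  simp_rw [gaussianPDFReal_two_mul_sq ha]
  rw [Finset.prod_mul_distrib, Finset.prod_const, Finset.card_univ, inv_pow, ← exp_sum,
    EuclideanSpace.norm_sq_eq, neg_div, Finset.sum_div, ← Finset.sum_neg_distrib]
  simp only [norm_eq_abs, sq_abs, neg_div]

lemma integral_cexp_mul_gaussianPDFReal {v : ℝ≥0} (hv : v ≠ 0) (c : ℝ) :
    ∫ t : ℝ, Complex.exp (Complex.I * (c * t : ℝ)) * gaussianPDFReal 0 v t =
      Complex.exp (-(v * c ^ 2 / 2) : ℝ) := by
  have h := charFun_gaussianReal (μ := 0) (v := v) c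
  rw [charFun_apply_real, integral_gaussianReal_eq_integral_smul hv] at h
  convert h using 1
  · congr 1 with t
    rw [Complex.real_smul, mul_comm]
    push_cast
    ring_nf
  · push_cast
    ring_nf

lemma integral_sign_mul_sin_mul_gaussianPDFReal {a : ℝ} (ha : 0 < a) (c : ℝ) :
    ∫ t, Real.sign t * sin (c * t) * gaussianPDFReal 0 (2 * a ^ 2).toNNReal t =
      exp (-a ^ 2 * c ^ 2) * erfi (a * c) := by
  have heven (t : ℝ) : Real.sign t * sin (c * t) * gaussianPDFReal 0 (2 * a ^ 2).toNNReal t =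
      (2 * a * √π)⁻¹ * (sin (c * |t|) * exp (-|t| ^ 2 / (4 * a ^ 2))) := by
    rw [gaussianPDFReal_two_mul_sq ha, sq_abs]
    rcases lt_trichotomy t 0 with ht | rfl | ht
    · rw [Real.sign_of_neg ht, abs_of_neg ht, mul_neg, sin_neg]
      ring
    · simp
    · rw [Real.sign_of_pos ht, abs_of_pos ht]
      ring
  simp_rw [heven, integral_const_mul]
  rw [integral_comp_abs (f := fun t => sin (c * t) * exp (-t ^ 2 / (4 * a ^ 2))),
    integral_Ioi_sin_mul_exp_neg_sq_div ha, dawson_eq, erfi]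
  have : √π ≠ 0 := by positivity
  field_simp

lemma integral_cexp_mul_sign_mul_gaussianPDFReal {a : ℝ} (ha : 0 < a) (c : ℝ) :
    ∫ t : ℝ, Complex.exp (Complex.I * (c * t : ℝ)) * (-Complex.I * (Real.sign t : ℂ)) *
      gaussianPDFReal 0 (2 * a ^ 2).toNNReal t = (exp (-a ^ 2 * c ^ 2) * erfi (a * c) : ℝ) := by
  set φ := gaussianPDFReal 0 (2 * a ^ 2).toNNReal
  set F := fun t : ℝ =>
    Complex.exp (Complex.I * (c * t : ℝ)) * (-Complex.I * (Real.sign t : ℂ)) * φ t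
  have hF : Integrable F := by
    refine (integrable_gaussianPDFReal 0 _).ofReal.bdd_mul (c := 1)
      (by fun_prop : Measurable _).aestronglyMeasurable (ae_of_all _ fun t => ?_)
    rw [norm_mul, norm_mul, mul_comm Complex.I, Complex.norm_exp_ofReal_mul_I, norm_neg,
      Complex.norm_I, Complex.norm_real, one_mul, one_mul, norm_eq_abs]
    rcases Real.sign_apply_eq t with h | h | h <;> simp [h]
  have hsymm (t : ℝ) : F t + F (-t) = 2 * (Real.sign t * sin (c * t) * φ t : ℝ) := by
    have hφ : φ (-t) = φ t := by simp only [φ, gaussianPDFReal, sub_zero, neg_sq]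
    have hexp (x : ℝ) : Complex.exp (Complex.I * x) = Real.cos x + Real.sin x * Complex.I := by
      rw [mul_comm, Complex.exp_mul_I, Complex.ofReal_cos, Complex.ofReal_sin]
    simp only [F]
    rw [hexp, hexp, hφ, Real.sign_neg, mul_neg, Real.cos_neg, Real.sin_neg]
    simp only [Complex.ofReal_mul, Complex.ofReal_neg]
    linear_combination (-2 * (Real.sign t : ℂ) * Real.sin (c * t) * φ t) * Complex.I_sq
  calc ∫ t, F t = (∫ t, (F t + F (-t))) / 2 := by
        rw [integral_add hF hF.comp_neg, integral_neg_eq_self]; ring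
    _ = ((∫ t, Real.sign t * sin (c * t) * φ t : ℝ) : ℂ) := by
        simp_rw [hsymm]
        rw [integral_const_mul, integral_complex_ofReal]
        ring
    _ = _ := by rw [integral_sign_mul_sin_mul_gaussianPDFReal ha]

lemma integral_cexp_mul_ite_mul_gaussianPDFReal {a : ℝ} (ha : 0 < a) (c : ℝ) (p : Prop)
    [Decidable p] :
    ∫ t : ℝ, Complex.exp (Complex.I * (c * t : ℝ)) *
        (if p then -Complex.I * (Real.sign t : ℂ) else 1) *
        gaussianPDFReal 0 (2 * a ^ 2).toNNReal t =
      (exp (-a ^ 2 * c ^ 2) : ℂ) * if p then (erfi (a * c) : ℂ) else 1 := by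
  split_ifs
  · rw [integral_cexp_mul_sign_mul_gaussianPDFReal ha, Complex.ofReal_mul]
  · simp only [mul_one]
    rw [integral_cexp_mul_gaussianPDFReal (Real.toNNReal_pos.mpr (by positivity)).ne',
      Real.coe_toNNReal _ (by positivity), ← Complex.ofReal_exp]
    ring_nf

lemma integral_cexp_inner_mul_sign_inner_single_mul_gaussian {ι : Type*} [Fintype ι]
    [DecidableEq ι] {a : ℝ} (ha : 0 < a) (h : EuclideanSpace ℝ ι) (i₀ : ι) :
    ∫ x : EuclideanSpace ℝ ι, Complex.exp (Complex.I * (inner ℝ h x : ℝ)) *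
        (-Complex.I * (Real.sign (inner ℝ x (EuclideanSpace.single i₀ 1)) : ℂ)) *
        ((((2 * a * √π) ^ Fintype.card ι)⁻¹ : ℝ) * Complex.exp ((-‖x‖ ^ 2 / (4 * a ^ 2) : ℝ))) =
      (exp (-a ^ 2 * ‖h‖ ^ 2) * erfi (a * inner ℝ h (EuclideanSpace.single i₀ 1)) : ℝ) := by
  set f : ι → ℝ → ℂ := fun i t => Complex.exp (Complex.I * (h i * t : ℝ)) *
    (if i = i₀ then -Complex.I * (Real.sign t : ℂ) else 1) *
    gaussianPDFReal 0 (2 * a ^ 2).toNNReal t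
  have hfactor (x : EuclideanSpace ℝ ι) :
      Complex.exp (Complex.I * (inner ℝ h x : ℝ)) *
        (-Complex.I * (Real.sign (inner ℝ x (EuclideanSpace.single i₀ 1)) : ℂ)) *
        ((((2 * a * √π) ^ Fintype.card ι)⁻¹ : ℝ) * Complex.exp ((-‖x‖ ^ 2 / (4 * a ^ 2) : ℝ))) =
      ∏ i, f i (x i) := by
    simp only [f, Finset.prod_mul_distrib, Finset.prod_ite_eq', Finset.mem_univ, if_true]
    rw [← Complex.exp_sum, ← Complex.ofReal_prod, prod_gaussianPDFReal_two_mul_sq ha,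
      EuclideanSpace.inner_single_right, PiLp.inner_apply, Complex.ofReal_sum, Finset.mul_sum]
    simp only [conj_trivial, one_mul, RCLike.inner_apply, mul_comm (x _)]
    push_cast
    ring_nf
  have hnorm : ∑ i, h i ^ 2 = ‖h‖ ^ 2 := by simp [EuclideanSpace.norm_sq_eq]
  simp_rw [hfactor, EuclideanSpace.integral_prod_apply, f,
    integral_cexp_mul_ite_mul_gaussianPDFReal ha]
  rw [Finset.prod_mul_distrib, Finset.prod_ite_eq', ← Complex.ofReal_prod, ← exp_sum,
    ← Finset.mul_sum, hnorm, EuclideanSpace.inner_single_right]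
  simp

/-- directional Hilbert transform of the d-dimensional
squared-exponential covariance:
`∫ e^{i⟨h,x⟩}(−i sign⟨x,xt⟩)(2a√π)^{−d} e^{−‖x‖²/(4a²)} dx = e^{−a²‖h‖²} erfi(a⟨h,xt⟩)`. -/
theorem stmt6 (d : ℕ) (a : ℝ) (ha : 0 < a)
    (xt h : EuclideanSpace ℝ (Fin d)) (hxt : ‖xt‖ = 1) :
    ∫ x : EuclideanSpace ℝ (Fin d),
        Complex.exp (Complex.I * (((inner ℝ h x : ℝ) : ℝ) : ℂ)) *
          (-Complex.I * ((Real.sign (inner ℝ x xt : ℝ) : ℝ) : ℂ)) *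
          ((((((2 * a * Real.sqrt Real.pi) ^ d)⁻¹ : ℝ)) : ℂ) *
            Complex.exp (((-‖x‖ ^ 2 / (4 * a ^ 2) : ℝ)) : ℂ)) =
    ((Real.exp (-a ^ 2 * ‖h‖ ^ 2) * erfi (a * (inner ℝ h xt : ℝ)) : ℝ) : ℂ) := by
  have : Nonempty (Fin d) := by
    by_contra hd
    rw [not_nonempty_iff] at hd
    simp [Subsingleton.elim xt 0] at hxt
  obtain ⟨b, rfl⟩ := exists_orthonormalBasis_apply_eq finrank_euclideanSpace
    (Classical.arbitrary (Fin d)) hxt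
  rw [← b.integral_comp_repr_symm, ← b.repr_symm_single, ← b.repr.symm_apply_apply h]
  simpa only [LinearIsometryEquiv.inner_map_map, LinearIsometryEquiv.norm_map,
    Fintype.card_fin] using integral_cexp_inner_mul_sign_inner_single_mul_gaussian ha (b.repr h) _
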